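/- With L(b) = (2/π)∫₀^{π/2} [Si(2b cos ψ)/(b cos ψ) - sin²(b cos ψ)/(b cos ψ)²] dψ and P_ICI(b) = P_T(1 - L(b)) for P_T > 0, the total ICI power satisfies (b²/18 - b⁴/50)·P_T ≤ P_ICI(b) ≤ (b²/18 + b⁴/60)·P_T for all b > 0. -/

import Mathlib

open Real MeasureTheory

lemma pos_aux (f f' : ℝ → ℝ) (hd : ∀ x, HasDerivAt f (f' x) x)
    (h0 : f 0 = 0) (hf' : ∀ x, 0 ≤ x → 0 ≤ f' x) (x : ℝ) (hx : 0 ≤ x) : 0 ≤ f x := by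
  have hm : MonotoneOn f (Set.Ici 0) := by
    apply monotoneOn_of_deriv_nonneg (convex_Ici 0)
      (fun y _ => (hd y).continuousAt.continuousWithinAt)
      (fun y _ => (hd y).differentiableAt.differentiableWithinAt)
    intro y hy
    rw [(hd y).deriv]
    exact hf' y (le_of_lt (by simpa using hy))
  simpa [h0] using hm (Set.self_mem_Ici) hx hx

lemma sin_ge_poly (x : ℝ) (hx : 0 ≤ x) : x - x^3/6 ≤ sin x := by
  have := pos_aux (fun t => sin t - (t - t^3/6)) (fun t => cos t - (1 - t^2/2))
    (fun t => by
      have h := (Real.hasDerivAt_sin t).sub ((hasDerivAt_id t).sub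
        ((hasDerivAt_pow 3 t).div_const 6))
      exact h.congr_deriv (by norm_num; ring)) (by simp)
    (fun t _ => sub_nonneg.2 (one_sub_sq_div_two_le_cos)) x hx
  linarith

lemma cos_le_poly (x : ℝ) (hx : 0 ≤ x) : cos x ≤ 1 - x^2/2 + x^4/24 := by
  have := pos_aux (fun t => 1 - t^2/2 + t^4/24 - cos t)
    (fun t => -(t) + t^3/6 + sin t)
    (fun t => by
      have h := (((hasDerivAt_const t (1:ℝ)).sub ((hasDerivAt_pow 2 t).div_const 2)).add
        ((hasDerivAt_pow 4 t).div_const 24)).sub (Real.hasDerivAt_cos t)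
      exact h.congr_deriv (by norm_num; ring))
    (by simp) (fun t ht => by nlinarith [sin_ge_poly t ht]) x hx
  linarith

lemma sin_le_poly (x : ℝ) (hx : 0 ≤ x) : sin x ≤ x - x^3/6 + x^5/120 := by
  have := pos_aux (fun t => t - t^3/6 + t^5/120 - sin t)
    (fun t => 1 - t^2/2 + t^4/24 - cos t)
    (fun t => by
      have h := (((hasDerivAt_id t).sub ((hasDerivAt_pow 3 t).div_const 6)).add
        ((hasDerivAt_pow 5 t).div_const 120)).sub (Real.hasDerivAt_sin t)
      exact h.congr_deriv (by norm_num; ring))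
    (by simp) (fun t ht => by nlinarith [cos_le_poly t ht]) x hx
  linarith

lemma cos_ge_poly (x : ℝ) (hx : 0 ≤ x) : 1 - x^2/2 + x^4/24 - x^6/720 ≤ cos x := by
  have := pos_aux (fun t => cos t - (1 - t^2/2 + t^4/24 - t^6/720))
    (fun t => t - t^3/6 + t^5/120 - sin t)
    (fun t => by
      have h := (Real.hasDerivAt_cos t).sub ((((hasDerivAt_const t (1:ℝ)).sub
        ((hasDerivAt_pow 2 t).div_const 2)).add ((hasDerivAt_pow 4 t).div_const 24)).sub
        ((hasDerivAt_pow 6 t).div_const 720))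
      exact h.congr_deriv (by norm_num; ring))
    (by simp) (fun t ht => by nlinarith [sin_le_poly t ht]) x hx
  linarith

lemma abs_sinc_le_one (t : ℝ) : |Real.sin t / t| ≤ 1 := by
  rcases eq_or_ne t 0 with h | h
  · simp [h]
  · rw [abs_div]
    exact div_le_one_of_le₀ (Real.abs_sin_le_abs) (abs_nonneg t)

lemma intervalIntegrable_sinc (a b : ℝ) :
    IntervalIntegrable (fun t => Real.sin t / t) volume a b := by
  rw [intervalIntegrable_iff]
  apply MeasureTheory.Integrable.mono' (g := fun _ => (1:ℝ)) (by
      have : IsFiniteMeasure (volume.restrict (Set.uIoc a b)) :=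
        ⟨by rw [Measure.restrict_apply_univ]; exact measure_Ioc_lt_top⟩
      exact integrable_const 1)
    ((Real.continuous_sin.measurable.div measurable_id).aestronglyMeasurable)
  exact Filter.Eventually.of_forall fun t => abs_sinc_le_one t

lemma ae_ne_zero_restrict (s : Set ℝ) : ∀ᵐ t ∂(volume.restrict s), t ≠ (0:ℝ) := by
  apply ae_restrict_of_ae
  refine (MeasureTheory.ae_iff).2 ?_
  simpa using Real.volume_singleton (x := (0:ℝ))

lemma Si_lb (y : ℝ) (hy : 0 < y) :
    y - y^3/18 ≤ ∫ t in (0:ℝ)..y, Real.sin t / t := by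
  have h1 : (∫ t in (0:ℝ)..y, (1 - t^2/6)) = y - y^3/18 := by
    rw [intervalIntegral.integral_sub intervalIntegrable_const
      ((intervalIntegral.intervalIntegrable_pow 2).div_const 6),
      intervalIntegral.integral_div, integral_pow]
    norm_num; ring
  rw [← h1]
  apply intervalIntegral.integral_mono_ae_restrict hy.le
    (intervalIntegrable_const.sub ((intervalIntegral.intervalIntegrable_pow 2).div_const 6))
    (intervalIntegrable_sinc 0 y)
  filter_upwards [ae_ne_zero_restrict _, ae_restrict_mem measurableSet_Icc] with t ht hmem
  have ht0 : 0 < t := lt_of_le_of_ne hmem.1 (Ne.symm ht)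
  rw [le_div_iff₀ ht0]
  nlinarith [sin_ge_poly t ht0.le]

lemma Si_ub (y : ℝ) (hy : 0 < y) :
    (∫ t in (0:ℝ)..y, Real.sin t / t) ≤ y - y^3/18 + y^5/600 := by
  have h1 : (∫ t in (0:ℝ)..y, (1 - t^2/6 + t^4/120)) = y - y^3/18 + y^5/600 := by
    rw [intervalIntegral.integral_add (intervalIntegrable_const.sub
        ((intervalIntegral.intervalIntegrable_pow 2).div_const 6))
        ((intervalIntegral.intervalIntegrable_pow 4).div_const 120),
      intervalIntegral.integral_sub intervalIntegrable_const
        ((intervalIntegral.intervalIntegrable_pow 2).div_const 6),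
      intervalIntegral.integral_div, intervalIntegral.integral_div, integral_pow, integral_pow]
    norm_num; ring
  rw [← h1]
  apply intervalIntegral.integral_mono_ae_restrict hy.le (intervalIntegrable_sinc 0 y)
    ((intervalIntegrable_const.sub
        ((intervalIntegral.intervalIntegrable_pow 2).div_const 6)).add
        ((intervalIntegral.intervalIntegrable_pow 4).div_const 120))
  filter_upwards [ae_ne_zero_restrict _, ae_restrict_mem measurableSet_Icc] with t ht hmem
  have ht0 : 0 < t := lt_of_le_of_ne hmem.1 (Ne.symm ht)
  rw [div_le_iff₀ ht0]
  nlinarith [sin_le_poly t ht0.le]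

lemma pointwise_bounds (x : ℝ) (hx : 0 < x) :
    x^2/9 - 4*x^4/75 ≤ 1 - ((∫ t in (0:ℝ)..(2*x), Real.sin t / t) / x - Real.sin x ^2 / x^2)
    ∧ 1 - ((∫ t in (0:ℝ)..(2*x), Real.sin t / t) / x - Real.sin x ^2 / x^2)
      ≤ x^2/9 + 2*x^4/45 := by
  have h2x : (0:ℝ) < 2*x := by linarith
  have hlb := Si_lb (2*x) h2x
  have hub := Si_ub (2*x) h2x
  have hs1 : x^2 - x^4/3 ≤ Real.sin x ^2 := by
    nlinarith [cos_le_poly (2*x) h2x.le, Real.sin_sq_eq_half_sub x]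
  have hs2 : Real.sin x ^2 ≤ x^2 - x^4/3 + 2*x^6/45 := by
    nlinarith [cos_ge_poly (2*x) h2x.le, Real.sin_sq_eq_half_sub x]
  have e1 : 2 - 4*x^2/9 ≤ (∫ t in (0:ℝ)..(2*x), Real.sin t / t) / x := by
    rw [le_div_iff₀ hx]; nlinarith
  have e2 : (∫ t in (0:ℝ)..(2*x), Real.sin t / t) / x ≤ 2 - 4*x^2/9 + 4*x^4/75 := by
    rw [div_le_iff₀ hx]; nlinarith
  have e3 : 1 - x^2/3 ≤ Real.sin x ^2 / x^2 := by
    rw [le_div_iff₀ (by positivity)]; nlinarith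
  have e4 : Real.sin x ^2 / x^2 ≤ 1 - x^2/3 + 2*x^4/45 := by
    rw [div_le_iff₀ (by positivity)]; nlinarith
  constructor <;> linarith

lemma ae_ne_restrict (c : ℝ) (s : Set ℝ) : ∀ᵐ t ∂(volume.restrict s), t ≠ c := by
  apply ae_restrict_of_ae
  refine (MeasureTheory.ae_iff).2 ?_
  simpa using Real.volume_singleton (x := c)

lemma h_integrable (b : ℝ) :
    IntervalIntegrable (fun ψ =>
      ((∫ t in (0:ℝ)..(2 * (b * Real.cos ψ)), Real.sin t / t) / (b * Real.cos ψ) -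
        Real.sin (b * Real.cos ψ) ^ 2 / (b * Real.cos ψ) ^ 2)) volume 0 (π/2) := by
  have hF : Continuous (fun u : ℝ => ∫ t in (0:ℝ)..u, Real.sin t / t) :=
    intervalIntegral.continuous_primitive (fun a b => intervalIntegrable_sinc a b) 0
  have hc : Continuous (fun ψ : ℝ => b * Real.cos ψ) := continuous_const.mul Real.continuous_cos
  have hmeas : Measurable (fun ψ =>
      ((∫ t in (0:ℝ)..(2 * (b * Real.cos ψ)), Real.sin t / t) / (b * Real.cos ψ) -
        Real.sin (b * Real.cos ψ) ^ 2 / (b * Real.cos ψ) ^ 2)) := by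
    apply Measurable.sub
    · exact ((hF.comp (continuous_const.mul hc)).measurable).div hc.measurable
    · exact ((Real.continuous_sin.comp hc).pow 2).measurable.div (hc.pow 2).measurable
  rw [intervalIntegrable_iff]
  apply MeasureTheory.Integrable.mono' (g := fun _ => (3:ℝ))
    (by
      have : IsFiniteMeasure (volume.restrict (Set.uIoc 0 (π/2))) :=
        ⟨by rw [Measure.restrict_apply_univ]; exact measure_Ioc_lt_top⟩
      exact integrable_const 3)
    hmeas.aestronglyMeasurable
  refine Filter.Eventually.of_forall fun ψ => ?_
  set c := b * Real.cos ψ with hcdef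
  have h1 : |(∫ t in (0:ℝ)..(2 * c), Real.sin t / t) / c| ≤ 2 := by
    rcases eq_or_ne c 0 with h | h
    · simp [h]
    · rw [abs_div]
      rw [div_le_iff₀ (abs_pos.2 h)]
      have := intervalIntegral.norm_integral_le_of_norm_le_const (C := 1)
        (f := fun t => Real.sin t / t) (a := (0:ℝ)) (b := 2*c)
        (fun t _ => abs_sinc_le_one t)
      simpa [abs_mul, mul_comm] using this
  have h2 : |Real.sin c ^ 2 / c ^ 2| ≤ 1 := by
    rcases eq_or_ne c 0 with h | h
    · simp [h]
    · rw [abs_div, div_le_one₀ (by positivity)]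
      rw [abs_pow, abs_pow]
      exact pow_le_pow_left₀ (abs_nonneg _) Real.abs_sin_le_abs 2
  calc ‖_ - _‖ ≤ |(∫ t in (0:ℝ)..(2 * c), Real.sin t / t) / c| + |Real.sin c ^ 2 / c ^ 2| :=
        abs_sub _ _
    _ ≤ 3 := by linarith

/-- Theorem 3 of the paper: with `L(b)` the normalized effective useful power and
`P_ICI(b) = P_T (1 - L(b))`, the total ICI power satisfies
`(b²/18 - b⁴/50) P_T ≤ P_ICI(b) ≤ (b²/18 + b⁴/60) P_T`. -/
theorem ICI_power_bounds (PT b : ℝ) (hPT : 0 < PT) (hb : 0 < b) :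
    (b ^ 2 / 18 - b ^ 4 / 50) * PT ≤
        PT * (1 - (2 / π) * ∫ ψ in (0:ℝ)..(π / 2),
          ((∫ t in (0:ℝ)..(2 * (b * Real.cos ψ)), Real.sin t / t) / (b * Real.cos ψ) -
            Real.sin (b * Real.cos ψ) ^ 2 / (b * Real.cos ψ) ^ 2)) ∧
      PT * (1 - (2 / π) * ∫ ψ in (0:ℝ)..(π / 2),
          ((∫ t in (0:ℝ)..(2 * (b * Real.cos ψ)), Real.sin t / t) / (b * Real.cos ψ) -
            Real.sin (b * Real.cos ψ) ^ 2 / (b * Real.cos ψ) ^ 2)) ≤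
        (b ^ 2 / 18 + b ^ 4 / 60) * PT := by
  have hπ : (0:ℝ) < π := Real.pi_pos
  have I2 : (∫ ψ in (0:ℝ)..(π/2), Real.cos ψ^2) = π/4 := by
    rw [integral_cos_sq]; simp; ring
  have I4 : (∫ ψ in (0:ℝ)..(π/2), Real.cos ψ^4) = 3*π/16 := by
    have h := integral_cos_pow (a := 0) (b := π/2) (n := 2)
    norm_num at h
    rw [h]; ring
  have Icos2 : IntervalIntegrable (fun ψ => Real.cos ψ^2) volume 0 (π/2) :=
    (Real.continuous_cos.pow 2).intervalIntegrable _ _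
  have Icos4 : IntervalIntegrable (fun ψ => Real.cos ψ^4) volume 0 (π/2) :=
    (Real.continuous_cos.pow 4).intervalIntegrable _ _
  set h := fun ψ =>
      ((∫ t in (0:ℝ)..(2 * (b * Real.cos ψ)), Real.sin t / t) / (b * Real.cos ψ) -
        Real.sin (b * Real.cos ψ) ^ 2 / (b * Real.cos ψ) ^ 2) with hdef
  have hub : (∫ ψ in (0:ℝ)..(π/2), h ψ)
      ≤ ∫ ψ in (0:ℝ)..(π/2), (1 - b^2/9 * Real.cos ψ^2 + 4*b^4/75 * Real.cos ψ^4) := by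
    apply intervalIntegral.integral_mono_ae_restrict (by positivity) (h_integrable b)
      (((intervalIntegrable_const.sub (Icos2.const_mul _)).add (Icos4.const_mul _)))
    filter_upwards [ae_ne_restrict (π/2) _, ae_restrict_mem measurableSet_Icc] with ψ hne hmem
    have hcos : 0 < Real.cos ψ := Real.cos_pos_of_mem_Ioo
      ⟨by linarith [hmem.1], lt_of_le_of_ne hmem.2 hne⟩
    have hx : 0 < b * Real.cos ψ := mul_pos hb hcos
    have := (pointwise_bounds (b * Real.cos ψ) hx).1
    nlinarith [this, sq_nonneg (Real.cos ψ), sq_nonneg b]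
  have hlb : (∫ ψ in (0:ℝ)..(π/2), (1 - b^2/9 * Real.cos ψ^2 - 2*b^4/45 * Real.cos ψ^4))
      ≤ ∫ ψ in (0:ℝ)..(π/2), h ψ := by
    apply intervalIntegral.integral_mono_ae_restrict (by positivity)
      ((intervalIntegrable_const.sub (Icos2.const_mul _)).sub (Icos4.const_mul _))
      (h_integrable b)
    filter_upwards [ae_ne_restrict (π/2) _, ae_restrict_mem measurableSet_Icc] with ψ hne hmem
    have hcos : 0 < Real.cos ψ := Real.cos_pos_of_mem_Ioo
      ⟨by linarith [hmem.1], lt_of_le_of_ne hmem.2 hne⟩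
    have hx : 0 < b * Real.cos ψ := mul_pos hb hcos
    have := (pointwise_bounds (b * Real.cos ψ) hx).2
    nlinarith [this]
  have hub' : (∫ ψ in (0:ℝ)..(π/2), (1 - b^2/9 * Real.cos ψ^2 + 4*b^4/75 * Real.cos ψ^4))
      = π/2 - π*b^2/36 + π*b^4/100 := by
    rw [intervalIntegral.integral_add (intervalIntegrable_const.sub (Icos2.const_mul _))
        (Icos4.const_mul _),
      intervalIntegral.integral_sub intervalIntegrable_const (Icos2.const_mul _),
      intervalIntegral.integral_const_mul, intervalIntegral.integral_const_mul,
      intervalIntegral.integral_const, I2, I4]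
    rw [smul_eq_mul]; ring
  have hlb' : (∫ ψ in (0:ℝ)..(π/2), (1 - b^2/9 * Real.cos ψ^2 - 2*b^4/45 * Real.cos ψ^4))
      = π/2 - π*b^2/36 - π*b^4/120 := by
    rw [intervalIntegral.integral_sub (intervalIntegrable_const.sub (Icos2.const_mul _))
        (Icos4.const_mul _),
      intervalIntegral.integral_sub intervalIntegrable_const (Icos2.const_mul _),
      intervalIntegral.integral_const_mul, intervalIntegral.integral_const_mul,
      intervalIntegral.integral_const, I2, I4]
    rw [smul_eq_mul]; ring
  set I := ∫ ψ in (0:ℝ)..(π/2), h ψ with hI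
  have h1 : I ≤ π/2 - π*b^2/36 + π*b^4/100 := hub'.symm ▸ hub
  have h2 : π/2 - π*b^2/36 - π*b^4/120 ≤ I := hlb' ▸ hlb
  have k1 : (2/π) * I ≤ 1 - b^2/18 + b^4/50 := by
    have := mul_le_mul_of_nonneg_left h1 (by positivity : (0:ℝ) ≤ 2/π)
    calc (2/π) * I ≤ (2/π) * (π/2 - π*b^2/36 + π*b^4/100) := this
      _ = 1 - b^2/18 + b^4/50 := by field_simp; ring
  have k2 : 1 - b^2/18 - b^4/60 ≤ (2/π) * I := by
    have := mul_le_mul_of_nonneg_left h2 (by positivity : (0:ℝ) ≤ 2/π)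
    calc (1:ℝ) - b^2/18 - b^4/60 = (2/π) * (π/2 - π*b^2/36 - π*b^4/120) := by field_simp; ring
      _ ≤ (2/π) * I := this
  constructor
  · calc (b ^ 2 / 18 - b ^ 4 / 50) * PT ≤ (1 - (2/π) * I) * PT := by nlinarith
      _ = PT * (1 - (2/π) * I) := by ring
  · calc PT * (1 - (2/π) * I) = (1 - (2/π) * I) * PT := by ring
      _ ≤ (b ^ 2 / 18 + b ^ 4 / 60) * PT := by nlinarith
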